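/- Parallel composition preserves counting-based leakage resilience: let t1 be a table over variables (p, k, r1) and t2 a table over (p, k, r2) with disjoint random columns r1 and r2. Define the count C_P(bp, bk, nodes, vals) as the number of random assignments under which the circuit's selected nodes take the given values. Suppose for all public inputs bp, all pairs of secret inputs bk, bk', and all selections of at most n nodes, the value-count distributions of t1 agree for bk and bk', and similarly for t2. Then for the parallel composition (which evaluates both circuits on shared inputs with independent randoms r1, r2) and any selection of at most n nodes total drawn from the union of the two circuits' nodes, the joint value-count distribution is independent of the secret input; indeed the count factorizes as the product of the component counts, so the composed circuit is n-leakage-resilient. -/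

import Mathlib

/-
A selection of nodes of `P₁ ∥ P₂` splits into the nodes it picks from `P₁` and those it picks
from `P₂`. Since the randoms of `(P₁ ∥ P₂)` are pairs of independent random assignments of
`P₁` and `P₂`, the count of the composed circuit is the product of the two component counts,
each for a selection of at most as many nodes; by resilience of `P₁` and `P₂` neither factor
depends on the secret input.
-/

/-- The number of random assignments under which the selected nodes take the
given values, for a circuit modeled by its evaluation function. -/
def CCount {P K R Node ι : Type} [Fintype R] [DecidableEq R] [Fintype ι]
    (eval : (P → ZMod 2) → (K → ZMod 2) → (R → ZMod 2) → Node → ZMod 2)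
    (bp : P → ZMod 2) (bk : K → ZMod 2) (α : ι → Node) (v : ι → ZMod 2) : ℕ :=
  ((Finset.univ : Finset (R → ZMod 2)).filter
    (fun br => ∀ i, eval bp bk br (α i) = v i)).card

/-- Parallel composition: shared public and secret inputs, disjoint randoms,
disjoint node sets, each side evaluated with its own randoms. -/
def parEval {P K R1 R2 Node1 Node2 : Type}
    (eval1 : (P → ZMod 2) → (K → ZMod 2) → (R1 → ZMod 2) → Node1 → ZMod 2)
    (eval2 : (P → ZMod 2) → (K → ZMod 2) → (R2 → ZMod 2) → Node2 → ZMod 2) :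
    (P → ZMod 2) → (K → ZMod 2) → (R1 ⊕ R2 → ZMod 2) → Node1 ⊕ Node2 → ZMod 2 :=
  fun bp bk br => Sum.elim (eval1 bp bk (br ∘ Sum.inl)) (eval2 bp bk (br ∘ Sum.inr))

/-- n-leakage-resilience: for any selection of at most n nodes, the joint
value-count distribution is independent of the secret input. -/
def Resilient {P K R Node : Type} [Fintype R] [DecidableEq R] (n : ℕ)
    (eval : (P → ZMod 2) → (K → ZMod 2) → (R → ZMod 2) → Node → ZMod 2) : Prop :=
  ∀ (j : ℕ), j ≤ n → ∀ (bp : P → ZMod 2) (bk bk' : K → ZMod 2)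
    (α : Fin j → Node) (v : Fin j → ZMod 2),
    CCount eval bp bk α v = CCount eval bp bk' α v

section

variable {P K R Node ι ι' : Type} [Fintype R] [DecidableEq R] [Fintype ι] [Fintype ι']

theorem CCount_comp_equiv
    (eval : (P → ZMod 2) → (K → ZMod 2) → (R → ZMod 2) → Node → ZMod 2)
    (bp : P → ZMod 2) (bk : K → ZMod 2) (α : ι → Node) (v : ι → ZMod 2) (e : ι' ≃ ι) :
    CCount eval bp bk (α ∘ e) (v ∘ e) = CCount eval bp bk α v := by
  simp only [CCount, Function.comp_apply]
  congr 2 with br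
  exact e.forall_congr_right (q := fun i => eval bp bk br (α i) = v i)

theorem Resilient.CCount_eq {n : ℕ}
    {eval : (P → ZMod 2) → (K → ZMod 2) → (R → ZMod 2) → Node → ZMod 2}
    (h : Resilient n eval) (hι : Fintype.card ι ≤ n)
    (bp : P → ZMod 2) (bk bk' : K → ZMod 2) (α : ι → Node) (v : ι → ZMod 2) :
    CCount eval bp bk α v = CCount eval bp bk' α v := by
  have e := (Fintype.equivFin ι).symm
  rw [← CCount_comp_equiv _ _ _ α v e, ← CCount_comp_equiv _ _ _ α v e]
  exact h _ hι bp bk bk' _ _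

end

section

variable {P K R1 R2 Node1 Node2 ι : Type}

def leftNodes (α : ι → Node1 ⊕ Node2) : {i // (α i).isLeft} → Node1 :=
  fun i => (α i).getLeft i.2

def rightNodes (α : ι → Node1 ⊕ Node2) : {i // (α i).isRight} → Node2 :=
  fun i => (α i).getRight i.2

theorem parEval_forall_eq_iff
    (eval1 : (P → ZMod 2) → (K → ZMod 2) → (R1 → ZMod 2) → Node1 → ZMod 2)
    (eval2 : (P → ZMod 2) → (K → ZMod 2) → (R2 → ZMod 2) → Node2 → ZMod 2)
    (bp : P → ZMod 2) (bk : K → ZMod 2) (br : R1 ⊕ R2 → ZMod 2)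
    (α : ι → Node1 ⊕ Node2) (v : ι → ZMod 2) :
    (∀ i, parEval eval1 eval2 bp bk br (α i) = v i) ↔
      (∀ i, eval1 bp bk (br ∘ Sum.inl) (leftNodes α i) = v i) ∧
      (∀ i, eval2 bp bk (br ∘ Sum.inr) (rightNodes α i) = v i) := by
  refine ⟨fun h => ⟨fun ⟨i, hi⟩ => ?_, fun ⟨i, hi⟩ => ?_⟩, fun ⟨h1, h2⟩ i => ?_⟩
  · have hval := h i
    rwa [Sum.eq_left_getLeft_of_isLeft hi] at hval
  · have hval := h i
    rwa [Sum.eq_right_getRight_of_isRight hi] at hval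
  · cases hα : α i with
    | inl a => simpa [leftNodes, parEval, hα] using h1 ⟨i, by simp [hα]⟩
    | inr b => simpa [rightNodes, parEval, hα] using h2 ⟨i, by simp [hα]⟩

theorem CCount_parEval [Fintype R1] [DecidableEq R1] [Fintype R2] [DecidableEq R2] [Fintype ι]
    (eval1 : (P → ZMod 2) → (K → ZMod 2) → (R1 → ZMod 2) → Node1 → ZMod 2)
    (eval2 : (P → ZMod 2) → (K → ZMod 2) → (R2 → ZMod 2) → Node2 → ZMod 2)
    (bp : P → ZMod 2) (bk : K → ZMod 2) (α : ι → Node1 ⊕ Node2) (v : ι → ZMod 2) :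
    CCount (parEval eval1 eval2) bp bk α v =
      CCount eval1 bp bk (leftNodes α) (v ∘ Subtype.val) *
        CCount eval2 bp bk (rightNodes α) (v ∘ Subtype.val) := by
  rw [CCount, CCount, CCount, ← Finset.card_product, ← Finset.filter_product]
  refine Finset.card_equiv (Equiv.sumArrowEquivProdArrow R1 R2 (ZMod 2)) fun br => ?_
  simp only [Finset.mem_filter, Finset.mem_univ, Finset.mem_product, true_and]
  exact parEval_forall_eq_iff eval1 eval2 bp bk br α v

end

/-- parallel composition of n-leakage-resilient circuits with
disjoint randoms is n-leakage-resilient. -/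
theorem parallel_composition_resilient {P K R1 R2 Node1 Node2 : Type}
    [Fintype R1] [DecidableEq R1] [Fintype R2] [DecidableEq R2] (n : ℕ)
    (eval1 : (P → ZMod 2) → (K → ZMod 2) → (R1 → ZMod 2) → Node1 → ZMod 2)
    (eval2 : (P → ZMod 2) → (K → ZMod 2) → (R2 → ZMod 2) → Node2 → ZMod 2)
    (h1 : Resilient n eval1) (h2 : Resilient n eval2) :
    Resilient n (parEval eval1 eval2) := by
  intro j hj bp bk bk' α v
  have hcard {p : Fin j → Prop} [DecidablePred p] : Fintype.card {i // p i} ≤ n :=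
    (Fintype.card_subtype_le p).trans (by simpa using hj)
  rw [CCount_parEval, CCount_parEval, h1.CCount_eq hcard bp bk bk',
    h2.CCount_eq hcard bp bk bk']
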